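/- arXiv:1804.03203 — 3 statements merged into one kernel-verified Lean document; each statement's English description precedes it below -/
import Mathlib

section
/- Let A be a C*-algebra, H a complex Hilbert space, π : A → B(H) a ⋆-algebra homomorphism, ρ : A → A and ρ_n : A → A (n ∈ ℕ) ⋆-algebra endomorphisms, and for each n let U_n ∈ B(H) be a unitary with U_n·π(ρ(a)) = π(ρ_n(a))·U_n for all a ∈ A. Suppose there is a dense subset D ⊆ A such that ‖ρ_n(a) − a‖ → 0 as n → ∞ for every a ∈ D. Then for every a ∈ A, π(ρ(a)) = lim_{n→∞} U_n* π(a) U_n in operator norm; that is, ρ is asymptotically inner in B(H). -/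
/-!
Since `Uₙ` intertwines `π ∘ ρ` with `π ∘ ρₙ`, conjugating by it gives
`Uₙ* π(a) Uₙ - π(ρ(a)) = Uₙ* π(a - ρₙ(a)) Uₙ`, whose norm is at most `‖a - ρₙ(a)‖` because
unitaries are isometric and ⋆-homomorphisms of C*-algebras are contractive. Contractivity also
makes the `ρₙ` uniformly 1-Lipschitz, so their pointwise convergence to the identity on the
dense set `D` propagates to all of `A`.
-/

open Filter Topology

theorem Dense.tendsto_of_equicontinuous {ι X Y : Type*} [TopologicalSpace X] [UniformSpace Y]
    {l : Filter ι} {F : ι → X → Y} {f : X → Y} (hF : Equicontinuous F) (hf : Continuous f)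
    {D : Set X} (hD : Dense D) (h : ∀ x ∈ D, Tendsto (F · x) l (𝓝 (f x))) (x : X) :
    Tendsto (F · x) l (𝓝 (f x)) := by
  have hDsub := (hF.isClosed_setOfPred_tendsto hf (l := l)).closure_subset_iff.mpr h
  exact hDsub (hD.closure_eq ▸ Set.mem_univ x)

theorem NonUnitalStarAlgHom.lipschitzWith_one {F A B : Type*} [NonUnitalCStarAlgebra A]
    [NonUnitalCStarAlgebra B] [FunLike F A B] [NonUnitalAlgHomClass F ℂ A B] [StarHomClass F A B]
    (φ : F) : LipschitzWith 1 φ :=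
  AddMonoidHomClass.lipschitz_of_bound_nnnorm φ 1 fun a => by
    simpa only [one_mul] using NonUnitalStarAlgHom.nnnorm_apply_le φ a

theorem Unitary.star_mul_mul_eq_of_mul_eq_mul {R : Type*} [Monoid R] [StarMul R]
    (u : unitary R) {x y : R} (h : (u : R) * y = x * u) : star (u : R) * x * u = y := by
  rw [mul_assoc, ← h, ← mul_assoc, Unitary.coe_star_mul_self, one_mul]

theorem CStarRing.norm_star_coe_unitary_mul_mul_coe_unitary {E : Type*} [NormedRing E]
    [StarRing E] [CStarRing E] (u : unitary E) (x : E) : ‖star (u : E) * x * u‖ = ‖x‖ := by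
  rw [CStarRing.norm_mul_coe_unitary, ← Unitary.coe_star, CStarRing.norm_coe_unitary_mul]

/-- **Lemma 3.2** (almost localized and transportable endomorphisms are asymptotically
inner). Suppose `ρ` and the `ρₙ` are ⋆-endomorphisms of a C*-algebra `A`, `π` is a
representation on a Hilbert space `H`, and for each `n` a unitary `Uₙ ∈ B(H)`
intertwines `π∘ρ` and `π∘ρₙ`. If `‖ρₙ(a) − a‖ → 0` for all `a` in a dense subset of
`A`, then `π(ρ(a)) = limₙ Uₙ* π(a) Uₙ` in norm, for every `a ∈ A`. -/
theorem asymptotically_inner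
    {A : Type*} [NormedRing A] [StarRing A] [CStarRing A]
    [NormedAlgebra ℂ A] [StarModule ℂ A] [CompleteSpace A]
    {H : Type*} [NormedAddCommGroup H] [InnerProductSpace ℂ H] [CompleteSpace H]
    (π : A →⋆ₐ[ℂ] (H →L[ℂ] H)) (ρ : A →⋆ₐ[ℂ] A) (ρn : ℕ → (A →⋆ₐ[ℂ] A))
    (U : ℕ → unitary (H →L[ℂ] H))
    (hU : ∀ (n : ℕ) (a : A),
      (U n : H →L[ℂ] H) * π (ρ a) = π (ρn n a) * (U n : H →L[ℂ] H))
    (D : Set A) (hD : Dense D)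
    (hconv : ∀ a ∈ D,
      Filter.Tendsto (fun n => ‖ρn n a - a‖) Filter.atTop (nhds 0)) :
    ∀ a : A,
      Filter.Tendsto
        (fun n => star (U n : H →L[ℂ] H) * π a * (U n : H →L[ℂ] H))
        Filter.atTop (nhds (π (ρ a))) := by
  let _ : CStarAlgebra A := { }
  intro a
  have hρn : Tendsto (ρn · a) atTop (𝓝 a) :=
    hD.tendsto_of_equicontinuous
      (LipschitzWith.uniformEquicontinuous _ 1 fun n =>
        NonUnitalStarAlgHom.lipschitzWith_one (ρn n)).equicontinuous
      continuous_id (fun b hb => tendsto_iff_norm_sub_tendsto_zero.mpr (hconv b hb)) a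
  have hbound (n : ℕ) :
      ‖star (U n : H →L[ℂ] H) * π a * U n - π (ρ a)‖ ≤ ‖a - ρn n a‖ := by
    calc ‖star (U n : H →L[ℂ] H) * π a * U n - π (ρ a)‖
        = ‖star (U n : H →L[ℂ] H) * π (a - ρn n a) * U n‖ := by
          rw [map_sub, mul_sub, sub_mul,
            Unitary.star_mul_mul_eq_of_mul_eq_mul (U n) (hU n a)]
      _ = ‖π (a - ρn n a)‖ := CStarRing.norm_star_coe_unitary_mul_mul_coe_unitary _ _
      _ ≤ ‖a - ρn n a‖ := NonUnitalStarAlgHom.norm_apply_le π _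
  refine tendsto_iff_norm_sub_tendsto_zero.mpr
    (squeeze_zero (fun _ => norm_nonneg _) hbound ?_)
  simpa only [sub_self, norm_zero] using ((tendsto_const_nhds (x := a)).sub hρn).norm
end

section
/- Let ν ≥ 1, let a ∈ ℝ^ν be a unit vector, let 0 < α < π/2, and let C = {x ∈ ℝ^ν : ⟨x, a⟩ ≥ ‖x‖·cos α} be the closed convex cone of half-angle α about a with apex 0. Let y ∈ ℝ^ν with y ≠ 0 and let φ ∈ [0, π] be the angle between y and a (so cos φ = ⟨y, a⟩/‖y‖). If α < φ ≤ π/2 + α, then the Euclidean distance from y to C equals ‖y‖·sin(φ − α). -/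
/-!
Write `y = ‖y‖ (cos φ • a + sin φ • u)` with `u` a unit vector orthogonal to `a`, and let
`n = -sin α • a + cos α • u` be the unit vector at angle `α + π/2` in that plane. Since
`a = cos α • m - sin α • n` for the unit vector `m` at angle `α`, and `⟪x, m⟫ ≤ ‖x‖`, the cone
lies in the half-space `⟪x, n⟫ ≤ 0`. On the other hand `y = x₀ + ‖y‖ sin (φ - α) • n` with
`x₀ = ‖y‖ cos (φ - α) • m` on the boundary ray of the cone (as `φ - α ≤ π/2`) and
`⟪x₀, n⟫ = 0`, so `x₀` is the point of the cone nearest to `y`.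
-/

open scoped RealInnerProductSpace
open Real

section

variable {E : Type*} [NormedAddCommGroup E] [InnerProductSpace ℝ E]

theorem infDist_add_smul_eq_of_subset_halfspace {C : Set E} {x₀ n : E} {d : ℝ}
    (hC : C ⊆ {x | ⟪x, n⟫ ≤ 0}) (hn : ‖n‖ = 1) (hx₀ : x₀ ∈ C) (hx₀n : ⟪x₀, n⟫ = 0)
    (hd : 0 ≤ d) :
    Metric.infDist (x₀ + d • n) C = d := by
  apply le_antisymm
  · calc Metric.infDist (x₀ + d • n) C ≤ dist (x₀ + d • n) x₀ :=
          Metric.infDist_le_dist_of_mem hx₀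
      _ = d := by
          rw [dist_eq_norm, add_sub_cancel_left, norm_smul, hn, mul_one, Real.norm_of_nonneg hd]
  · refine (Metric.le_infDist ⟨x₀, hx₀⟩).2 fun x hx => ?_
    have hxn : ⟪x, n⟫ ≤ 0 := hC hx
    calc d ≤ ⟪x₀ + d • n - x, n⟫ := by
          rw [inner_sub_left, inner_add_left, hx₀n, real_inner_smul_left,
            real_inner_self_eq_norm_sq, hn]
          linarith
      _ ≤ ‖x₀ + d • n - x‖ * ‖n‖ := real_inner_le_norm _ _
      _ = dist (x₀ + d • n) x := by rw [hn, mul_one, dist_eq_norm]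

noncomputable def circleVec (a u : E) (θ : ℝ) : E := cos θ • a + sin θ • u

theorem circleVec_zero (a u : E) : circleVec a u 0 = a := by simp [circleVec]

theorem circleVec_eq_cos_smul_add_sin_smul (a u : E) (θ ψ : ℝ) :
    circleVec a u ψ =
      cos (ψ - θ) • circleVec a u θ + sin (ψ - θ) • circleVec a u (θ + π / 2) := by
  conv_lhs => rw [← add_sub_cancel θ ψ]
  simp only [circleVec, cos_add, sin_add, cos_pi_div_two, sin_pi_div_two]
  module

theorem exists_eq_norm_smul_circleVec {a y : E} {φ : ℝ} (ha : ‖a‖ = 1) (hy : y ≠ 0)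
    (hya : ⟪y, a⟫ = ‖y‖ * cos φ) (hsin : 0 < sin φ) :
    ∃ u : E, ⟪a, u⟫ = 0 ∧ ‖u‖ = 1 ∧ y = ‖y‖ • circleVec a u φ := by
  set w := y - ⟪y, a⟫ • a
  have hs : 0 < ‖y‖ * sin φ := mul_pos (norm_pos_iff.2 hy) hsin
  have haa : ⟪a, a⟫ = 1 := by rw [real_inner_self_eq_norm_sq, ha, one_pow]
  have haw : ⟪a, w⟫ = 0 := by
    rw [inner_sub_right, real_inner_smul_right, haa, real_inner_comm]; ring
  have hw : ‖w‖ = ‖y‖ * sin φ := by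
    refine (sq_eq_sq₀ (norm_nonneg w) hs.le).1 ?_
    rw [norm_sub_sq_real, real_inner_smul_right, norm_smul, ha, Real.norm_eq_abs, hya]
    nlinarith [sin_sq_add_cos_sq φ, sq_abs (‖y‖ * cos φ)]
  refine ⟨(‖y‖ * sin φ)⁻¹ • w, ?_, ?_, ?_⟩
  · rw [real_inner_smul_right, haw, mul_zero]
  · rw [norm_smul, hw, norm_inv, Real.norm_of_nonneg hs.le, inv_mul_cancel₀ hs.ne']
  · have hw' : ‖y‖ • sin φ • (‖y‖ * sin φ)⁻¹ • w = w := by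
      rw [smul_smul, smul_smul, mul_inv_cancel₀ hs.ne', one_smul]
    rw [circleVec, smul_add, hw', smul_smul, ← hya]
    exact (add_sub_cancel _ _).symm

variable {a u : E} (ha : ‖a‖ = 1) (hu : ‖u‖ = 1) (hau : ⟪a, u⟫ = 0)
include ha hu hau

theorem inner_circleVec_circleVec (θ ψ : ℝ) :
    ⟪circleVec a u θ, circleVec a u ψ⟫ = cos (θ - ψ) := by
  have hua : ⟪u, a⟫ = 0 := by rw [real_inner_comm, hau]
  simp only [circleVec, inner_add_left, inner_add_right, real_inner_smul_left,
    real_inner_smul_right, real_inner_self_eq_norm_sq, ha, hu, hau, hua, cos_sub]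
  ring

theorem norm_circleVec (θ : ℝ) : ‖circleVec a u θ‖ = 1 := by
  rw [norm_eq_sqrt_real_inner, inner_circleVec_circleVec ha hu hau, sub_self, cos_zero,
    sqrt_one]

theorem inner_circleVec_add_pi_div_two (θ : ℝ) :
    ⟪circleVec a u θ, circleVec a u (θ + π / 2)⟫ = 0 := by
  rw [inner_circleVec_circleVec ha hu hau, sub_add_cancel_left, cos_neg, cos_pi_div_two]

theorem smul_circleVec_mem_cone {c : ℝ} (hc : 0 ≤ c) (α : ℝ) :
    c • circleVec a u α ∈ {x : E | ‖x‖ * cos α ≤ ⟪x, a⟫} := by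
  show ‖c • circleVec a u α‖ * cos α ≤ ⟪c • circleVec a u α, a⟫
  have hαa := inner_circleVec_circleVec ha hu hau α 0
  rw [circleVec_zero, sub_zero] at hαa
  rw [norm_smul, norm_circleVec ha hu hau, Real.norm_of_nonneg hc, real_inner_smul_left, hαa,
    mul_one]

theorem inner_circleVec_add_pi_div_two_nonpos {α : ℝ} (hα : 0 < α) (hα' : α < π / 2) {x : E}
    (hx : ‖x‖ * cos α ≤ ⟪x, a⟫) :
    ⟪x, circleVec a u (α + π / 2)⟫ ≤ 0 := by
  have ha' : a = cos α • circleVec a u α - sin α • circleVec a u (α + π / 2) := by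
    have h0 := circleVec_eq_cos_smul_add_sin_smul a u α 0
    rwa [circleVec_zero, zero_sub, cos_neg, sin_neg, neg_smul, ← sub_eq_add_neg] at h0
  have hxm : ⟪x, circleVec a u α⟫ ≤ ‖x‖ := by
    simpa [norm_circleVec ha hu hau] using real_inner_le_norm x (circleVec a u α)
  have hsin : 0 < sin α := sin_pos_of_pos_of_lt_pi hα (by linarith [pi_pos])
  have hcos : 0 ≤ cos α := cos_nonneg_of_mem_Icc ⟨by linarith [pi_pos], hα'.le⟩
  rw [ha', inner_sub_right, real_inner_smul_right, real_inner_smul_right] at hx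
  nlinarith [mul_le_mul_of_nonneg_left hxm hcos]

end

theorem dist_to_convex_cone_general
    {ν : ℕ}
    (a : EuclideanSpace ℝ (Fin ν)) (ha : ‖a‖ = 1)
    (α : ℝ) (hα : 0 < α) (hα' : α < π / 2)
    (y : EuclideanSpace ℝ (Fin ν)) (hy : y ≠ 0)
    (φ : ℝ)
    (hcos : Real.cos φ = ⟪y, a⟫ / ‖y‖)
    (h1 : α < φ) (h2 : φ ≤ π / 2 + α) :
    Metric.infDist y {x : EuclideanSpace ℝ (Fin ν) | ‖x‖ * Real.cos α ≤ ⟪x, a⟫}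
      = ‖y‖ * Real.sin (φ - α) := by
  have hπ := pi_pos
  have hya : ⟪y, a⟫ = ‖y‖ * cos φ := by
    rw [hcos, mul_div_cancel₀ _ (norm_ne_zero_iff.2 hy)]
  obtain ⟨u, hau, hu, hyu⟩ := exists_eq_norm_smul_circleVec ha hy hya
    (sin_pos_of_pos_of_lt_pi (by linarith) (by linarith))
  have hy' : y = (‖y‖ * cos (φ - α)) • circleVec a u α
      + (‖y‖ * sin (φ - α)) • circleVec a u (α + π / 2) := by
    rw [← smul_smul, ← smul_smul, ← smul_add, ← circleVec_eq_cos_smul_add_sin_smul]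
    exact hyu
  have hc : 0 ≤ ‖y‖ * cos (φ - α) :=
    mul_nonneg (norm_nonneg y) (cos_nonneg_of_mem_Icc ⟨by linarith, by linarith⟩)
  have hd : 0 ≤ ‖y‖ * sin (φ - α) :=
    mul_nonneg (norm_nonneg y) (sin_nonneg_of_nonneg_of_le_pi (by linarith) (by linarith))
  have key := infDist_add_smul_eq_of_subset_halfspace
    (fun _ => inner_circleVec_add_pi_div_two_nonpos ha hu hau hα hα')
    (norm_circleVec ha hu hau _) (smul_circleVec_mem_cone ha hu hau hc α)
    (by rw [real_inner_smul_left, inner_circleVec_add_pi_div_two ha hu hau, mul_zero]) hd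
  rwa [← hy'] at key

/-- **Distance formula in the proof of Lemma A.1.** Let `C` be the closed convex cone
of half-angle `α` about the unit vector `a` (apex at the origin), let `y ≠ 0`, and
let `φ ∈ [0, π]` be the angle between `y` and `a`. If `α < φ ≤ π/2 + α`, then the
Euclidean distance from `y` to `C` equals `‖y‖·sin(φ − α)`. -/
theorem dist_to_convex_cone
    {ν : ℕ} (hν : 1 ≤ ν)
    (a : EuclideanSpace ℝ (Fin ν)) (ha : ‖a‖ = 1)
    (α : ℝ) (hα : 0 < α) (hα' : α < π / 2)
    (y : EuclideanSpace ℝ (Fin ν)) (hy : y ≠ 0)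
    (φ : ℝ) (hφ0 : 0 ≤ φ) (hφπ : φ ≤ π)
    (hcos : Real.cos φ = ⟪y, a⟫ / ‖y‖)
    (h1 : α < φ) (h2 : φ ≤ π / 2 + α) :
    Metric.infDist y {x : EuclideanSpace ℝ (Fin ν) | ‖x‖ * Real.cos α ≤ ⟪x, a⟫}
      = ‖y‖ * Real.sin (φ - α) :=
  dist_to_convex_cone_general a ha α hα hα' y hy φ hcos h1 h2
end

section
/- Let ν ≥ 1, let F : [0,∞) → [0,∞) be non-increasing, let g : [0,∞) → [0,∞) be non-decreasing and subadditive (g(x + y) ≤ g(x) + g(y) for all x, y ≥ 0), and let b > 0. Define F_{bg}(r) = e^{−b g(r)}·F(r). Then: (i) F_{bg} is non-increasing; (ii) Σ_{y∈ℤ^ν} F_{bg}(‖x − y‖) ≤ Σ_{y∈ℤ^ν} F(‖x − y‖) for every x ∈ ℤ^ν, so ‖F_{bg}‖₀ ≤ ‖F‖₀; (iii) if C ≥ 0 satisfies Σ_{z∈ℤ^ν} F(‖x−z‖)·F(‖z−y‖) ≤ C·F(‖x−y‖) for all x, y ∈ ℤ^ν, then Σ_{z∈ℤ^ν} F_{bg}(‖x−z‖)·F_{bg}(‖z−y‖)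 ≤ C·F_{bg}(‖x−y‖) for all x, y ∈ ℤ^ν. In particular, if F is an F-function on ℤ^ν then F_{bg} is again an F-function on ℤ^ν. -/
/-!
Write `F_{bg} = w · F` with `w = e^{-b g}`. Since `g ≥ 0` and `b > 0`, `0 < w ≤ 1`, which gives
(ii) by comparison of sums, and (i) because `w` and `F` are both non-increasing and non-negative.
For (iii), monotonicity and subadditivity of `g` turn the triangle inequality into
`g(d(x,y)) ≤ g(d(x,z)) + g(d(z,y))`, i.e. `w(d(x,z)) · w(d(z,y)) ≤ w(d(x,y))`; so the weighted
convolution is bounded termwise by `w(d(x,y))` times the convolution of `F`.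
-/

noncomputable section

/-- The embedding of the lattice `ℤ^ν` into Euclidean space `ℝ^ν`. -/
def latticeEmbed (ν : ℕ) (x : Fin ν → ℤ) : EuclideanSpace ℝ (Fin ν) :=
  WithLp.toLp 2 (fun i => (x i : ℝ))

open Real

def expWeighted (b : ℝ) (g F : ℝ → ℝ) (r : ℝ) : ℝ :=
  exp (-b * g r) * F r

section ExpWeighted

variable {b : ℝ} {g F : ℝ → ℝ}

lemma exp_neg_mul_le_one {t : ℝ} (hb : 0 ≤ b) (ht : 0 ≤ t) : exp (-b * t) ≤ 1 :=
  exp_le_one_iff.mpr (by nlinarith)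

lemma expWeighted_nonneg {r : ℝ} (hF : 0 ≤ F r) : 0 ≤ expWeighted b g F r :=
  mul_nonneg (exp_pos _).le hF

lemma expWeighted_le_self {r : ℝ} (hb : 0 ≤ b) (hg : 0 ≤ g r) (hF : 0 ≤ F r) :
    expWeighted b g F r ≤ F r :=
  mul_le_of_le_one_left hF (exp_neg_mul_le_one hb hg)

lemma antitoneOn_expWeighted {s : Set ℝ} (hb : 0 ≤ b) (hg : MonotoneOn g s)
    (hF : AntitoneOn F s) (hF₀ : ∀ r ∈ s, 0 ≤ F r) : AntitoneOn (expWeighted b g F) s := by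
  intro r hr t ht hrt
  have hexp : exp (-b * g t) ≤ exp (-b * g r) :=
    exp_le_exp.mpr (mul_le_mul_of_nonpos_left (hg hr ht hrt) (neg_nonpos.mpr hb))
  exact mul_le_mul hexp (hF hr ht hrt) (hF₀ t ht) (exp_pos _).le

variable {ι : Type*}

lemma summable_expWeighted_comp {d : ι → ℝ} (hb : 0 ≤ b) (hg : ∀ i, 0 ≤ g (d i))
    (hF : ∀ i, 0 ≤ F (d i)) (hsum : Summable fun i => F (d i)) :
    Summable fun i => expWeighted b g F (d i) :=
  hsum.of_nonneg_of_le (fun i => expWeighted_nonneg (hF i))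
    (fun i => expWeighted_le_self hb (hg i) (hF i))

lemma tsum_expWeighted_comp_le {d : ι → ℝ} (hb : 0 ≤ b) (hg : ∀ i, 0 ≤ g (d i))
    (hF : ∀ i, 0 ≤ F (d i)) (hsum : Summable fun i => F (d i)) :
    ∑' i, expWeighted b g F (d i) ≤ ∑' i, F (d i) :=
  (summable_expWeighted_comp hb hg hF hsum).tsum_le_tsum
    (fun i => expWeighted_le_self hb (hg i) (hF i)) hsum

end ExpWeighted

section Metric

variable {X : Type*} [PseudoMetricSpace X] {g : ℝ → ℝ}

lemma MonotoneOn.map_dist_le_add (hg : MonotoneOn g (Set.Ici 0))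
    (hg_subadd : ∀ s t : ℝ, 0 ≤ s → 0 ≤ t → g (s + t) ≤ g s + g t) (x y z : X) :
    g (dist x y) ≤ g (dist x z) + g (dist z y) :=
  calc g (dist x y) ≤ g (dist x z + dist z y) :=
        hg dist_nonneg (add_nonneg dist_nonneg dist_nonneg) (dist_triangle x z y)
    _ ≤ g (dist x z) + g (dist z y) := hg_subadd _ _ dist_nonneg dist_nonneg

variable {b : ℝ} {F : ℝ → ℝ}

lemma expWeighted_dist_mul_le (hb : 0 ≤ b) (hg : MonotoneOn g (Set.Ici 0))
    (hg_subadd : ∀ s t : ℝ, 0 ≤ s → 0 ≤ t → g (s + t) ≤ g s + g t)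
    (hF : ∀ r, 0 ≤ r → 0 ≤ F r) (x y z : X) :
    expWeighted b g F (dist x z) * expWeighted b g F (dist z y) ≤
      exp (-b * g (dist x y)) * (F (dist x z) * F (dist z y)) := by
  have hexp : exp (-b * g (dist x z)) * exp (-b * g (dist z y)) ≤ exp (-b * g (dist x y)) := by
    rw [← exp_add, ← mul_add]
    exact exp_le_exp.mpr (mul_le_mul_of_nonpos_left (hg.map_dist_le_add hg_subadd x y z)
      (neg_nonpos.mpr hb))
  calc expWeighted b g F (dist x z) * expWeighted b g F (dist z y)
      = exp (-b * g (dist x z)) * exp (-b * g (dist z y)) * (F (dist x z) * F (dist z y)) := by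
        unfold expWeighted; ring
    _ ≤ exp (-b * g (dist x y)) * (F (dist x z) * F (dist z y)) :=
        mul_le_mul_of_nonneg_right hexp (mul_nonneg (hF _ dist_nonneg) (hF _ dist_nonneg))

variable {ι : Type*} (e : ι → X)

lemma summable_expWeighted_conv (hb : 0 ≤ b) (hg : MonotoneOn g (Set.Ici 0))
    (hg_subadd : ∀ s t : ℝ, 0 ≤ s → 0 ≤ t → g (s + t) ≤ g s + g t)
    (hF : ∀ r, 0 ≤ r → 0 ≤ F r) (x y : ι)
    (hsum : Summable fun z => F (dist (e x) (e z)) * F (dist (e z) (e y))) :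
    Summable fun z =>
      expWeighted b g F (dist (e x) (e z)) * expWeighted b g F (dist (e z) (e y)) :=
  (hsum.mul_left _).of_nonneg_of_le
    (fun _ => mul_nonneg (expWeighted_nonneg (hF _ dist_nonneg))
      (expWeighted_nonneg (hF _ dist_nonneg)))
    (fun z => expWeighted_dist_mul_le hb hg hg_subadd hF (e x) (e y) (e z))

lemma tsum_expWeighted_conv_le (hb : 0 ≤ b) (hg : MonotoneOn g (Set.Ici 0))
    (hg_subadd : ∀ s t : ℝ, 0 ≤ s → 0 ≤ t → g (s + t) ≤ g s + g t)
    (hF : ∀ r, 0 ≤ r → 0 ≤ F r) {C : ℝ} (x y : ι)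
    (hsum : Summable fun z => F (dist (e x) (e z)) * F (dist (e z) (e y)))
    (hconv : ∑' z, F (dist (e x) (e z)) * F (dist (e z) (e y)) ≤ C * F (dist (e x) (e y))) :
    ∑' z, expWeighted b g F (dist (e x) (e z)) * expWeighted b g F (dist (e z) (e y)) ≤
      C * expWeighted b g F (dist (e x) (e y)) := by
  set w := exp (-b * g (dist (e x) (e y)))
  calc ∑' z, expWeighted b g F (dist (e x) (e z)) * expWeighted b g F (dist (e z) (e y))
      ≤ ∑' z, w * (F (dist (e x) (e z)) * F (dist (e z) (e y))) :=
        (summable_expWeighted_conv e hb hg hg_subadd hF x y hsum).tsum_le_tsum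
          (fun z => expWeighted_dist_mul_le hb hg hg_subadd hF (e x) (e y) (e z))
          (hsum.mul_left w)
    _ = w * ∑' z, F (dist (e x) (e z)) * F (dist (e z) (e y)) := tsum_mul_left
    _ ≤ w * (C * F (dist (e x) (e y))) := mul_le_mul_of_nonneg_left hconv (exp_pos _).le
    _ = C * expWeighted b g F (dist (e x) (e y)) := by unfold expWeighted; ring

end Metric

theorem weighted_F_function_general
    (ν : ℕ)
    (F : ℝ → ℝ) (hF_nonneg : ∀ r, 0 ≤ r → 0 ≤ F r) (hF_anti : AntitoneOn F (Set.Ici 0))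
    (g : ℝ → ℝ) (hg_nonneg : ∀ r, 0 ≤ r → 0 ≤ g r) (hg_mono : MonotoneOn g (Set.Ici 0))
    (hg_subadd : ∀ x y : ℝ, 0 ≤ x → 0 ≤ y → g (x + y) ≤ g x + g y)
    (b : ℝ) (hb : 0 < b)
    (hF_sum : ∀ x : Fin ν → ℤ,
      Summable (fun y : Fin ν → ℤ => F (dist (latticeEmbed ν x) (latticeEmbed ν y)))) :
    -- (i) `F_{bg}` is non-increasing on `[0,∞)`
    AntitoneOn (fun r => Real.exp (-b * g r) * F r) (Set.Ici 0) ∧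
    -- (ii) the lattice sums of `F_{bg}` are summable and dominated by those of `F`
    (∀ x : Fin ν → ℤ,
      Summable (fun y : Fin ν → ℤ =>
        Real.exp (-b * g (dist (latticeEmbed ν x) (latticeEmbed ν y))) *
          F (dist (latticeEmbed ν x) (latticeEmbed ν y))) ∧
      (∑' y : Fin ν → ℤ,
        Real.exp (-b * g (dist (latticeEmbed ν x) (latticeEmbed ν y))) *
          F (dist (latticeEmbed ν x) (latticeEmbed ν y)))
        ≤ ∑' y : Fin ν → ℤ, F (dist (latticeEmbed ν x) (latticeEmbed ν y))) ∧
    -- (iii) a convolution constant for `F` is a convolution constant for `F_{bg}`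
    (∀ C : ℝ, 0 ≤ C →
      (∀ x y : Fin ν → ℤ,
        Summable (fun z : Fin ν → ℤ =>
          F (dist (latticeEmbed ν x) (latticeEmbed ν z)) *
            F (dist (latticeEmbed ν z) (latticeEmbed ν y))) ∧
        (∑' z : Fin ν → ℤ,
          F (dist (latticeEmbed ν x) (latticeEmbed ν z)) *
            F (dist (latticeEmbed ν z) (latticeEmbed ν y)))
          ≤ C * F (dist (latticeEmbed ν x) (latticeEmbed ν y))) →
      ∀ x y : Fin ν → ℤ,
        Summable (fun z : Fin ν → ℤ =>
          (Real.exp (-b * g (dist (latticeEmbed ν x) (latticeEmbed ν z))) *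
            F (dist (latticeEmbed ν x) (latticeEmbed ν z))) *
          (Real.exp (-b * g (dist (latticeEmbed ν z) (latticeEmbed ν y))) *
            F (dist (latticeEmbed ν z) (latticeEmbed ν y)))) ∧
        (∑' z : Fin ν → ℤ,
          (Real.exp (-b * g (dist (latticeEmbed ν x) (latticeEmbed ν z))) *
            F (dist (latticeEmbed ν x) (latticeEmbed ν z))) *
          (Real.exp (-b * g (dist (latticeEmbed ν z) (latticeEmbed ν y))) *
            F (dist (latticeEmbed ν z) (latticeEmbed ν y))))
          ≤ C * (Real.exp (-b * g (dist (latticeEmbed ν x) (latticeEmbed ν y))) *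
              F (dist (latticeEmbed ν x) (latticeEmbed ν y)))) := by
  have hb₀ : 0 ≤ b := hb.le
  refine ⟨antitoneOn_expWeighted hb₀ hg_mono hF_anti hF_nonneg, fun x => ?_, ?_⟩
  · have hg₀ := fun y => hg_nonneg (dist (latticeEmbed ν x) (latticeEmbed ν y)) dist_nonneg
    have hF₀ := fun y => hF_nonneg (dist (latticeEmbed ν x) (latticeEmbed ν y)) dist_nonneg
    exact ⟨summable_expWeighted_comp hb₀ hg₀ hF₀ (hF_sum x),
      tsum_expWeighted_comp_le hb₀ hg₀ hF₀ (hF_sum x)⟩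
  · intro C _ hconv x y
    exact ⟨summable_expWeighted_conv _ hb₀ hg_mono hg_subadd hF_nonneg x y (hconv x y).1,
      tsum_expWeighted_conv_le _ hb₀ hg_mono hg_subadd hF_nonneg x y (hconv x y).1
        (hconv x y).2⟩

/-- If `F` is an `F`-function on `ℤ^ν`, `g : [0,∞) → [0,∞)` is non-decreasing and
subadditive and `b > 0`, then `F_{bg}(r) = e^{−b g(r)}·F(r)` is again an `F`-function:
(i) it is non-increasing, (ii) its lattice sums are dominated by those of `F`
(so `‖F_{bg}‖₀ ≤ ‖F‖₀`), and (iii) any convolution constant `C` for `F` is also a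
convolution constant for `F_{bg}`. -/
theorem weighted_F_function
    (ν : ℕ) (hν : 1 ≤ ν)
    (F : ℝ → ℝ) (hF_nonneg : ∀ r, 0 ≤ r → 0 ≤ F r) (hF_anti : AntitoneOn F (Set.Ici 0))
    (g : ℝ → ℝ) (hg_nonneg : ∀ r, 0 ≤ r → 0 ≤ g r) (hg_mono : MonotoneOn g (Set.Ici 0))
    (hg_subadd : ∀ x y : ℝ, 0 ≤ x → 0 ≤ y → g (x + y) ≤ g x + g y)
    (b : ℝ) (hb : 0 < b)
    (hF_sum : ∀ x : Fin ν → ℤ,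
      Summable (fun y : Fin ν → ℤ => F (dist (latticeEmbed ν x) (latticeEmbed ν y)))) :
    -- (i) `F_{bg}` is non-increasing on `[0,∞)`
    AntitoneOn (fun r => Real.exp (-b * g r) * F r) (Set.Ici 0) ∧
    -- (ii) the lattice sums of `F_{bg}` are summable and dominated by those of `F`
    (∀ x : Fin ν → ℤ,
      Summable (fun y : Fin ν → ℤ =>
        Real.exp (-b * g (dist (latticeEmbed ν x) (latticeEmbed ν y))) *
          F (dist (latticeEmbed ν x) (latticeEmbed ν y))) ∧
      (∑' y : Fin ν → ℤ,
        Real.exp (-b * g (dist (latticeEmbed ν x) (latticeEmbed ν y))) *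
          F (dist (latticeEmbed ν x) (latticeEmbed ν y)))
        ≤ ∑' y : Fin ν → ℤ, F (dist (latticeEmbed ν x) (latticeEmbed ν y))) ∧
    -- (iii) a convolution constant for `F` is a convolution constant for `F_{bg}`
    (∀ C : ℝ, 0 ≤ C →
      (∀ x y : Fin ν → ℤ,
        Summable (fun z : Fin ν → ℤ =>
          F (dist (latticeEmbed ν x) (latticeEmbed ν z)) *
            F (dist (latticeEmbed ν z) (latticeEmbed ν y))) ∧
        (∑' z : Fin ν → ℤ,
          F (dist (latticeEmbed ν x) (latticeEmbed ν z)) *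
            F (dist (latticeEmbed ν z) (latticeEmbed ν y)))
          ≤ C * F (dist (latticeEmbed ν x) (latticeEmbed ν y))) →
      ∀ x y : Fin ν → ℤ,
        Summable (fun z : Fin ν → ℤ =>
          (Real.exp (-b * g (dist (latticeEmbed ν x) (latticeEmbed ν z))) *
            F (dist (latticeEmbed ν x) (latticeEmbed ν z))) *
          (Real.exp (-b * g (dist (latticeEmbed ν z) (latticeEmbed ν y))) *
            F (dist (latticeEmbed ν z) (latticeEmbed ν y)))) ∧
        (∑' z : Fin ν → ℤ,
          (Real.exp (-b * g (dist (latticeEmbed ν x) (latticeEmbed ν z))) *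
            F (dist (latticeEmbed ν x) (latticeEmbed ν z))) *
          (Real.exp (-b * g (dist (latticeEmbed ν z) (latticeEmbed ν y))) *
            F (dist (latticeEmbed ν z) (latticeEmbed ν y))))
          ≤ C * (Real.exp (-b * g (dist (latticeEmbed ν x) (latticeEmbed ν y))) *
              F (dist (latticeEmbed ν x) (latticeEmbed ν y)))) :=
  weighted_F_function_general ν F hF_nonneg hF_anti g hg_nonneg hg_mono hg_subadd b hb hF_sum

end
end
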